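/- arXiv:math/0701351 — 3 statements merged into one kernel-verified Lean document; each statement's English description precedes it below -/
import Mathlib

section
/- Let d be a squarefree negative integer and K = ℚ(√d). Then the quaternion algebra (−1,−3/K) is a division ring if and only if d ≡ 1 (mod 3). -/
/-!
The reduced norm of `x ∈ (-1,-3/K)` is `x₀² + x₁² + 3x₂² + 3x₃²`, and the algebra is a division
ring iff this form is anisotropic over `K = ℚ(√d)`.

If `d ≡ 1 (mod 3)`, write an isotropic vector as `a + √d b` with `a, b ∈ ℤ⁴` (after clearing
denominators): then `N(a) + d N(b) = 0` and `B(a, b) = 0`. For `s² ≡ d (mod 9)` this gives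
`N(a ± s b) ≡ 0 (mod 9)`, which forces `3 ∣ a, b`; infinite descent gives `a = b = 0`.

If `d ≢ 1 (mod 3)`, put `n = -d`; a solution of `x² + y² + 3z² = 3n w²` with `w ≠ 0` gives the
isotropic vector `(x, y, z, w√d)`. Dirichlet's theorem provides a prime `p ≡ 5 (mod 8)` with
`p ≡ m (mod 3)` and `m ∣ 3p + 1`, where `m = n` or `m = n / 3`. Quadratic reciprocity then verifies
Legendre's conditions for `x² + 3p y² = n z²`, resp. `3x² + p y² = m z²`, and writing `p = a² + b²`
turns a solution into the required one.
-/

open Quaternion NumberTheorySymbols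

theorem exists_ne_zero_map_eq_zero_of_card_lt {G : Type*} [AddCommGroup G] [Fintype G]
    (f : ℤ × ℤ × ℤ →+ G) (m₁ m₂ m₃ : ℕ)
    (hcard : Fintype.card G < (m₁ + 1) * (m₂ + 1) * (m₃ + 1)) :
    ∃ x y z : ℤ, (x, y, z) ≠ 0 ∧ f (x, y, z) = 0 ∧ |x| ≤ m₁ ∧ |y| ≤ m₂ ∧ |z| ≤ m₃ := by
  let box := Finset.range (m₁ + 1) ×ˢ Finset.range (m₂ + 1) ×ˢ Finset.range (m₃ + 1)
  have hbox : Fintype.card G < box.card := by simpa [box, mul_assoc] using hcard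
  obtain ⟨u, hu, v, hv, huv, hfuv⟩ := Finset.exists_ne_map_eq_of_card_lt_of_maps_to
    (t := Finset.univ) (f := fun t : ℕ × ℕ × ℕ => f (t.1, t.2.1, t.2.2))
    (by simpa using hbox) (fun _ _ => Finset.mem_univ _)
  simp only [box, Finset.mem_product, Finset.mem_range] at hu hv
  refine ⟨u.1 - v.1, u.2.1 - v.2.1, u.2.2 - v.2.2, ?_, ?_, ?_, ?_, ?_⟩
  · contrapose! huv
    simp only [Prod.ext_iff, Prod.fst_zero, Prod.snd_zero, sub_eq_zero, Nat.cast_inj] at huv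
    exact Prod.ext huv.1 (Prod.ext huv.2.1 huv.2.2)
  · simpa [← Prod.mk_sub_mk, sub_eq_zero] using hfuv
  all_goals rw [abs_le]; omega

theorem Nat.mul_mul_lt_succ_sqrt_mul_succ_sqrt_mul_succ_sqrt (a b c : ℕ) :
    a * b * c < (sqrt (b * c) + 1) * (sqrt (a * c) + 1) * (sqrt (a * b) + 1) := by
  refine lt_of_pow_lt_pow_left₀ 2 (zero_le _) ?_
  calc (a * b * c) ^ 2 = (b * c) * (a * c) * (a * b) := by ring
    _ < (sqrt (b * c) + 1) ^ 2 * (sqrt (a * c) + 1) ^ 2 * (sqrt (a * b) + 1) ^ 2 := by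
      gcongr <;> exact lt_succ_sqrt' _
    _ = _ := by ring

theorem Int.sq_le_of_abs_le_sqrt {x : ℤ} {n : ℕ} (hx : |x| ≤ Nat.sqrt n) : x ^ 2 ≤ n := by
  calc x ^ 2 ≤ (Nat.sqrt n : ℤ) ^ 2 := sq_le_sq' (abs_le.mp hx).1 (abs_le.mp hx).2
    _ ≤ n := by exact_mod_cast Nat.sqrt_le' n

section Legendre

variable {A B C x y z : ℤ}

theorem Int.mul_mul_dvd_mul_sq_add_mul_sq_sub_mul_sq {ρ σ τ : ℤ}
    (hAB : IsCoprime A B) (hAC : IsCoprime A C) (hBC : IsCoprime B C)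
    (hρ : C ∣ ρ ^ 2 + A * B) (hσ : B ∣ σ ^ 2 - A * C) (hτ : A ∣ τ ^ 2 - B * C)
    (hx : C ∣ A * x + ρ * y) (hy : B ∣ A * x - σ * z) (hz : A ∣ B * y - τ * z) :
    A * B * C ∣ A * x ^ 2 + B * y ^ 2 - C * z ^ 2 := by
  set Q := A * x ^ 2 + B * y ^ 2 - C * z ^ 2
  have hQC : C ∣ A * Q := by
    have : A * Q = (A * x + ρ * y) * (A * x - ρ * y) + (ρ ^ 2 + A * B) * y ^ 2
        - C * (A * z ^ 2) := by ring
    rw [this]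
    exact ((hx.mul_right _).add (hρ.mul_right _)).sub (dvd_mul_right _ _)
  have hQB : B ∣ A * Q := by
    have : A * Q = (A * x - σ * z) * (A * x + σ * z) + (σ ^ 2 - A * C) * z ^ 2
        + B * (A * y ^ 2) := by ring
    rw [this]
    exact ((hy.mul_right _).add (hσ.mul_right _)).add (dvd_mul_right _ _)
  have hQA : A ∣ B * Q := by
    have : B * Q = (B * y - τ * z) * (B * y + τ * z) + (τ ^ 2 - B * C) * z ^ 2
        + A * (B * x ^ 2) := by ring
    rw [this]
    exact ((hz.mul_right _).add (hτ.mul_right _)).add (dvd_mul_right _ _)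
  exact (hAC.mul_left hBC).mul_dvd
    (hAB.mul_dvd (hAB.dvd_of_dvd_mul_left hQA) (hAB.symm.dvd_of_dvd_mul_left hQB))
    (hAC.symm.dvd_of_dvd_mul_left hQC)

theorem Int.mul_sq_add_mul_sq_sub_mul_sq_eq_zero_or_eq (hA : 0 < A) (hB : 0 < B) (hC : 0 < C)
    (hx : x ^ 2 < B * C) (hy : y ^ 2 ≤ A * C) (hz : z ^ 2 < A * B)
    (h : A * B * C ∣ A * x ^ 2 + B * y ^ 2 - C * z ^ 2) :
    A * x ^ 2 + B * y ^ 2 - C * z ^ 2 = 0 ∨ A * x ^ 2 + B * y ^ 2 - C * z ^ 2 = A * B * C := by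
  have hAx := mul_lt_mul_of_pos_left hx hA
  have hBy := mul_le_mul_of_nonneg_left hy hB.le
  have hCz := mul_lt_mul_of_pos_left hz hC
  have hABC : 0 < A * B * C := by positivity
  obtain ⟨k, hk⟩ := h
  have hk2 : A * B * C * k < A * B * C * 2 := by rw [← hk]; nlinarith [sq_nonneg z]
  have hk0 : A * B * C * (-1) < A * B * C * k := by
    rw [← hk]; nlinarith [sq_nonneg x, sq_nonneg y]
  have := lt_of_mul_lt_mul_left hk2 hABC.le
  have := lt_of_mul_lt_mul_left hk0 hABC.le
  obtain rfl | rfl : k = 0 ∨ k = 1 := by omega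
  exacts [Or.inl (by rw [hk, mul_zero]), Or.inr (by rw [hk, mul_one])]

/-- Legendre's theorem (sufficiency of the congruence conditions). -/
theorem Int.exists_mul_sq_add_mul_sq_eq_mul_sq {ρ σ τ : ℤ} (hA : 0 < A) (hB : 0 < B)
    (hC : 0 < C) (hAB : IsCoprime A B) (hAC : IsCoprime A C) (hBC : IsCoprime B C)
    (hAB' : ¬ IsSquare (A * B)) (hBC' : ¬ IsSquare (B * C))
    (hρ : C ∣ ρ ^ 2 + A * B) (hσ : B ∣ σ ^ 2 - A * C) (hτ : A ∣ τ ^ 2 - B * C) :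
    ∃ x y z : ℤ, z ≠ 0 ∧ A * x ^ 2 + B * y ^ 2 = C * z ^ 2 := by
  lift A to ℕ using hA.le
  lift B to ℕ using hB.le
  lift C to ℕ using hC.le
  have : NeZero A := ⟨by omega⟩
  have : NeZero B := ⟨by omega⟩
  have : NeZero C := ⟨by omega⟩
  let f : ℤ × ℤ × ℤ →+ ZMod C × ZMod B × ZMod A := AddMonoidHom.mk'
    (fun v => ((A * v.1 + ρ * v.2.1 : ℤ), (A * v.1 - σ * v.2.2 : ℤ), (B * v.2.1 - τ * v.2.2 : ℤ)))
    (fun v w => by ext <;> (simp only [Prod.fst_add, Prod.snd_add]; push_cast; ring))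
  obtain ⟨x, y, z, hxyz, hf, hx, hy, hz⟩ := exists_ne_zero_map_eq_zero_of_card_lt f
    (Nat.sqrt (B * C)) (Nat.sqrt (A * C)) (Nat.sqrt (A * B)) (by
      simpa [ZMod.card, mul_comm, mul_left_comm] using
        Nat.mul_mul_lt_succ_sqrt_mul_succ_sqrt_mul_succ_sqrt A B C)
  simp only [f, AddMonoidHom.mk'_apply, Prod.mk_eq_zero, ZMod.intCast_zmod_eq_zero_iff_dvd] at hf
  have hx2 : x ^ 2 < B * C :=
    (by exact_mod_cast Int.sq_le_of_abs_le_sqrt hx : x ^ 2 ≤ B * C).lt_of_ne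
      fun h => hBC' ⟨x, by rw [← h, sq]⟩
  have hy2 : y ^ 2 ≤ A * C := by exact_mod_cast Int.sq_le_of_abs_le_sqrt hy
  have hz2 : z ^ 2 < A * B :=
    (by exact_mod_cast Int.sq_le_of_abs_le_sqrt hz : z ^ 2 ≤ A * B).lt_of_ne
      fun h => hAB' ⟨z, by rw [← h, sq]⟩
  rcases Int.mul_sq_add_mul_sq_sub_mul_sq_eq_zero_or_eq hA hB hC hx2 hy2 hz2
    (Int.mul_mul_dvd_mul_sq_add_mul_sq_sub_mul_sq hAB hAC hBC hρ hσ hτ hf.1 hf.2.1 hf.2.2)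
    with h | h
  · refine ⟨x, y, z, ?_, by linarith⟩
    rintro rfl
    have hx0 : x = 0 := by nlinarith [sq_nonneg x, sq_nonneg y]
    have hy0 : y = 0 := by nlinarith [sq_nonneg x, sq_nonneg y]
    exact hxyz (by simp [hx0, hy0])
  · exact ⟨x * z + B * y, y * z - A * x, z ^ 2 + A * B, by positivity,
      by linear_combination (z ^ 2 + A * B) * h⟩

end Legendre

theorem Nat.exists_prime_gt_modEq_and_modEq {q₁ q₂ a₁ a₂ : ℕ} (hq₁ : q₁ ≠ 0) (hq₂ : q₂ ≠ 0)
    (hq : q₁.Coprime q₂) (ha₁ : a₁.Coprime q₁) (ha₂ : a₂.Coprime q₂) (n : ℕ) :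
    ∃ p > n, p.Prime ∧ p ≡ a₁ [MOD q₁] ∧ p ≡ a₂ [MOD q₂] := by
  let a := chineseRemainder hq a₁ a₂
  have ha : (a : ℕ).Coprime (q₁ * q₂) :=
    Coprime.mul_right (a.2.1.gcd_eq.trans ha₁) (a.2.2.gcd_eq.trans ha₂)
  obtain ⟨p, hpn, hp, hpa⟩ := forall_exists_prime_gt_and_modEq n (mul_ne_zero hq₁ hq₂) ha
  exact ⟨p, hpn, hp, (hpa.of_mul_right _).trans a.2.1, (hpa.of_mul_left _).trans a.2.2⟩

theorem exists_prime_mod_eight_eq_five_dvd_three_mul_add_one {m : ℕ} (hm : Squarefree m)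
    (hm3 : ¬ 3 ∣ m) (n : ℕ) :
    ∃ p > n, p.Prime ∧ p % 8 = 5 ∧ p % 3 = m % 3 ∧ m ∣ 3 * p + 1 := by
  obtain ⟨e, m', hm', rfl⟩ := Nat.exists_eq_two_pow_mul_odd hm.ne_zero
  have he : e ≤ 1 := by
    by_contra! he
    exact absurd (hm 2 ((pow_dvd_pow 2 he).mul_right m')) (by decide)
  have h3m' : Nat.Coprime 3 m' :=
    (Nat.Prime.coprime_iff_not_dvd Nat.prime_three).mpr fun h => hm3 (h.mul_left _)
  have h2m' : Nat.Coprime 2 m' := Nat.coprime_two_left.mpr hm'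
  obtain ⟨a₁, ha₁, ha₁8, ha₁3⟩ :
      ∃ a₁, a₁.Coprime 24 ∧ a₁ % 8 = 5 ∧ a₁ % 3 = 2 ^ e * m' % 3 := by
    rcases (by omega : 2 ^ e * m' % 3 = 1 ∨ 2 ^ e * m' % 3 = 2) with h | h
    · exact ⟨13, by norm_num, rfl, by omega⟩
    · exact ⟨5, by norm_num, rfl, by omega⟩
  have : NeZero m' := ⟨hm'.pos.ne'⟩
  let u : (ZMod m')ˣ := -(ZMod.unitOfCoprime 3 h3m')⁻¹
  have hu : m' ∣ 3 * (u : ZMod m').val + 1 := by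
    rw [← ZMod.natCast_eq_zero_iff]
    have h3u : (3 : ZMod m') * ((ZMod.unitOfCoprime 3 h3m')⁻¹ : (ZMod m')ˣ) = 1 :=
      (ZMod.unitOfCoprime 3 h3m').mul_inv
    simp [u, h3u]
  obtain ⟨p, hpn, hp, hp₁, hp₂⟩ := Nat.exists_prime_gt_modEq_and_modEq (by norm_num)
    hm'.pos.ne' (Nat.Coprime.mul_left (h2m'.pow_left 3) h3m') ha₁ (ZMod.val_coe_unit_coprime u) n
  unfold Nat.ModEq at hp₁
  refine ⟨p, hpn, hp, by omega, by omega, Nat.Coprime.mul_dvd_of_dvd_of_dvd (h2m'.pow_left e)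
    ((pow_dvd_pow 2 he).trans (by omega)) ?_⟩
  exact (((hp₂.mul_left 3).add_right 1).dvd_iff dvd_rfl).mpr hu

theorem jacobiSym_neg_three {m : ℕ} (hm : Odd m) : J(-3 | m) = J(m | 3) := by
  rw [jacobiSym.neg _ hm]
  rcases Nat.odd_mod_four_iff.mp (Nat.odd_iff.mp hm) with h | h
  · rw [ZMod.χ₄_nat_one_mod_four h, one_mul]
    exact_mod_cast (jacobiSym.quadratic_reciprocity_one_mod_four h (b := 3) (by decide)).symm
  · rw [ZMod.χ₄_nat_three_mod_four h]
    have := jacobiSym.quadratic_reciprocity_three_mod_four (a := 3) (b := m) rfl h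
    push_cast at this
    rw [this, neg_one_mul, neg_neg]

theorem jacobiSym_eq_jacobiSym_three_of_dvd {p m : ℕ} (hp : p % 8 = 5) (hm : m ∣ 3 * p + 1) :
    J(m | p) = J(m | 3) := by
  have hp_odd : Odd p := Nat.odd_iff.mpr (by omega)
  obtain ⟨e, m', hm', rfl⟩ := Nat.exists_eq_two_pow_mul_odd (n := m) (by rintro rfl; simp at hm)
  have h3m' : Int.gcd 3 m' = 1 := by
    have : ¬ 3 ∣ m' := fun h => by have := (h.mul_left _).trans hm; omega
    simpa [Int.gcd] using (Nat.Prime.coprime_iff_not_dvd Nat.prime_three).mpr this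
  -- `9p ≡ -3 (mod m')`
  have hm'p : J(m' | p) = J(m' | 3) := by
    rw [jacobiSym.quadratic_reciprocity_one_mod_four' hm' (by omega), ← jacobiSym_neg_three hm',
      ← one_mul J((p : ℤ) | m'), ← jacobiSym.sq_one' h3m', ← jacobiSym.mul_left]
    apply jacobiSym.mod_left'
    have : (m' : ℤ) ∣ 3 * p + 1 := by exact_mod_cast dvd_of_mul_left_dvd hm
    exact Int.modEq_iff_dvd.mpr
      (by rw [show (-3 : ℤ) - 3 ^ 2 * p = -3 * (3 * p + 1) by ring]; exact this.mul_left _)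
  have h2p : J(2 | p) = -1 := by
    rw [jacobiSym.at_two hp_odd, ZMod.χ₈_nat_mod_eight, hp]; rfl
  have h23 : J(2 | 3) = -1 := by rw [jacobiSym.at_two (by decide)]; rfl
  push_cast
  rw [jacobiSym.mul_left, jacobiSym.mul_left, jacobiSym.pow_left, jacobiSym.pow_left, h2p, h23,
    hm'p]

theorem exists_dvd_sq_sub_of_jacobiSym_eq_one {a : ℤ} {p : ℕ} [Fact p.Prime]
    (h : J(a | p) = 1) : ∃ s : ℤ, (p : ℤ) ∣ s ^ 2 - a := by
  obtain ⟨t, ht⟩ := ZMod.isSquare_of_jacobiSym_eq_one h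
  refine ⟨t.val, ?_⟩
  rw [← ZMod.intCast_zmod_eq_zero_iff_dvd]
  push_cast
  rw [ZMod.natCast_zmod_val, ht, sq, sub_self]

theorem Nat.Prime.not_isSquare_intCast_mul {p k : ℕ} (hp : p.Prime) (hk : ¬ p ∣ k) :
    ¬ IsSquare ((p : ℤ) * k) := by
  rw [← Nat.cast_mul, Int.isSquare_natCast_iff]
  rintro ⟨s, hs⟩
  obtain ⟨t, rfl⟩ : p ∣ s := (hp.dvd_mul.mp (hs ▸ dvd_mul_right p k)).elim id id
  exact hk ⟨t * t, Nat.eq_of_mul_eq_mul_left hp.pos (by rw [hs]; ring)⟩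

theorem exists_sq_add_sq_add_three_mul_sq_eq_three_mul_of_mod_three_eq_one {n : ℕ}
    (hn : Squarefree n) (hn3 : n % 3 = 1) :
    ∃ x y z w : ℤ, w ≠ 0 ∧ x ^ 2 + y ^ 2 + 3 * z ^ 2 = 3 * n * w ^ 2 := by
  obtain ⟨p, hpn, hp, hp8, hp3, hnp⟩ :=
    exists_prime_mod_eight_eq_five_dvd_three_mul_add_one hn (by omega) (3 * n)
  have : Fact p.Prime := ⟨hp⟩
  have hn0 : 0 < n := Nat.pos_of_ne_zero hn.ne_zero
  have hJ : J(n | p) = 1 := by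
    rw [jacobiSym_eq_jacobiSym_three_of_dvd hp8 hnp, jacobiSym.mod_left,
      show (n : ℤ) % (3 : ℕ) = 1 by omega, jacobiSym.one_left]
  obtain ⟨s, hs⟩ := exists_dvd_sq_sub_of_jacobiSym_eq_one hJ
  -- `σ = s + p (1 - s)` is `s` mod `p` and, as `p ≡ 1 (mod 3)`, `1` mod `3`
  have hσ : 3 * (p : ℤ) ∣ (s + p * (1 - s)) ^ 2 - n := by
    refine IsCoprime.mul_dvd ?_ ?_ ?_
    · exact_mod_cast Nat.isCoprime_iff_coprime.mpr
        ((Nat.coprime_primes Nat.prime_three hp).mpr (by omega))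
    · apply (ZMod.intCast_zmod_eq_zero_iff_dvd _ 3).mp
      push_cast
      rw [← ZMod.natCast_mod p, ← ZMod.natCast_mod n, hp3, hn3]
      ring
    · have : (s + p * (1 - s)) ^ 2 - n = (s ^ 2 - n) + p * ((1 - s) * (2 * s + p * (1 - s))) := by
        ring
      rw [this]
      exact hs.add (dvd_mul_right _ _)
  have hp3n : ¬ p ∣ 3 * n := Nat.not_dvd_of_pos_of_lt (by positivity) hpn
  have hp3 : ¬ p ∣ 3 := Nat.not_dvd_of_pos_of_lt (by positivity) (by omega)
  have h3pn : IsCoprime (3 * p : ℤ) n := by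
    exact_mod_cast Nat.isCoprime_iff_coprime.mpr (Nat.Coprime.mul_left
      ((Nat.Prime.coprime_iff_not_dvd Nat.prime_three).mpr (by omega))
      ((Nat.Prime.coprime_iff_not_dvd hp).mpr fun h => hp3n (h.mul_left 3)))
  obtain ⟨x, y, z, hz, hxyz⟩ := Int.exists_mul_sq_add_mul_sq_eq_mul_sq (A := 1) (B := 3 * p)
    (C := n) (ρ := 1) (τ := 0) one_pos (by have := hp.pos; positivity) (by exact_mod_cast hn0)
    isCoprime_one_left isCoprime_one_left h3pn
    (by convert hp.not_isSquare_intCast_mul hp3 using 2; push_cast; ring)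
    (by convert hp.not_isSquare_intCast_mul hp3n using 2; push_cast; ring)
    (by rw [one_pow, one_mul, add_comm]; exact_mod_cast hnp) (by simpa using hσ) (one_dvd _)
  obtain ⟨a, b, hab⟩ := Nat.Prime.sq_add_sq (p := p) (by omega)
  refine ⟨3 * y * a, 3 * y * b, x, z, hz, ?_⟩
  have hab' : (a : ℤ) ^ 2 + b ^ 2 = p := by exact_mod_cast hab
  linear_combination 3 * hxyz + 9 * y ^ 2 * hab'

theorem exists_sq_add_sq_add_three_mul_sq_eq_nine_mul_of_not_three_dvd {m : ℕ}
    (hm : Squarefree m) (hm3 : ¬ 3 ∣ m) :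
    ∃ x y z w : ℤ, w ≠ 0 ∧ x ^ 2 + y ^ 2 + 3 * z ^ 2 = 9 * m * w ^ 2 := by
  obtain ⟨p, hpn, hp, hp8, hp3, hmp⟩ :=
    exists_prime_mod_eight_eq_five_dvd_three_mul_add_one hm hm3 (3 * m)
  have : Fact p.Prime := ⟨hp⟩
  have hm0 : 0 < m := Nat.pos_of_ne_zero hm.ne_zero
  have hJ : J(3 * m | p) = 1 := by
    have h3p : J(3 | p) = J(m | 3) := by
      rw [show (3 : ℤ) = (3 : ℕ) from rfl,
        jacobiSym.quadratic_reciprocity_one_mod_four' (by decide) (by omega)]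
      exact jacobiSym.mod_left' (by exact_mod_cast hp3)
    rw [jacobiSym.mul_left, h3p, jacobiSym_eq_jacobiSym_three_of_dvd hp8 hmp, ← sq]
    refine jacobiSym.sq_one ?_
    simpa [Int.gcd] using ((Nat.Prime.coprime_iff_not_dvd Nat.prime_three).mpr hm3).symm
  obtain ⟨σ, hσ⟩ := exists_dvd_sq_sub_of_jacobiSym_eq_one hJ
  have hτ : (3 : ℤ) ∣ 1 ^ 2 - p * m := by
    apply (ZMod.intCast_zmod_eq_zero_iff_dvd _ 3).mp
    push_cast
    rw [← ZMod.natCast_mod p, hp3, ← ZMod.natCast_mod m]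
    rcases (by omega : m % 3 = 1 ∨ m % 3 = 2) with h | h <;> rw [h] <;> decide
  have hp3 : ¬ p ∣ 3 := Nat.not_dvd_of_pos_of_lt (by positivity) (by omega)
  have hpm : ¬ p ∣ m := Nat.not_dvd_of_pos_of_lt hm0 (by omega)
  have h3p : IsCoprime (3 : ℤ) p := by
    exact_mod_cast Nat.isCoprime_iff_coprime.mpr
      ((Nat.coprime_primes Nat.prime_three hp).mpr (by omega))
  have h3m : IsCoprime (3 : ℤ) m := by
    exact_mod_cast Nat.isCoprime_iff_coprime.mpr
      ((Nat.Prime.coprime_iff_not_dvd Nat.prime_three).mpr hm3)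
  obtain ⟨x, y, z, hz, hxyz⟩ := Int.exists_mul_sq_add_mul_sq_eq_mul_sq (A := 3) (B := p)
    (C := m) (ρ := 1) (τ := 1) (by norm_num) (by exact_mod_cast hp.pos) (by exact_mod_cast hm0)
    h3p h3m (Nat.isCoprime_iff_coprime.mpr ((Nat.Prime.coprime_iff_not_dvd hp).mpr hpm))
    (by convert hp.not_isSquare_intCast_mul hp3 using 2; push_cast; ring)
    (hp.not_isSquare_intCast_mul hpm)
    (by rw [one_pow, add_comm]; exact_mod_cast hmp) hσ hτ
  obtain ⟨a, b, hab⟩ := Nat.Prime.sq_add_sq (p := p) (by omega)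
  refine ⟨3 * y * a, 3 * y * b, 3 * x, z, hz, ?_⟩
  have hab' : (a : ℤ) ^ 2 + b ^ 2 = p := by exact_mod_cast hab
  linear_combination 9 * hxyz + 9 * y ^ 2 * hab'

theorem exists_sq_add_sq_add_three_mul_sq_add_three_mul_mul_sq_eq_zero {d : ℤ}
    (hd : Squarefree d) (hdneg : d < 0) (hd3 : d % 3 ≠ 1) :
    ∃ x y z w : ℤ, w ≠ 0 ∧ x ^ 2 + y ^ 2 + 3 * z ^ 2 + 3 * d * w ^ 2 = 0 := by
  obtain ⟨n, rfl⟩ : ∃ n : ℕ, d = -n := ⟨d.natAbs, by omega⟩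
  have hn : Squarefree n := by simpa using Int.squarefree_natAbs.mpr hd
  rcases (by omega : n % 3 = 1 ∨ 3 ∣ n) with hn3 | ⟨m, rfl⟩
  · obtain ⟨x, y, z, w, hw, h⟩ :=
      exists_sq_add_sq_add_three_mul_sq_eq_three_mul_of_mod_three_eq_one hn hn3
    exact ⟨x, y, z, w, hw, by linear_combination h⟩
  · have hm : Squarefree m := hn.squarefree_of_dvd (dvd_mul_left m 3)
    have hm3 : ¬ 3 ∣ m := fun h => absurd (hn 3 (mul_dvd_mul_left 3 h)) (by decide)
    obtain ⟨x, y, z, w, hw, h⟩ :=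
      exists_sq_add_sq_add_three_mul_sq_eq_nine_mul_of_not_three_dvd hm hm3
    exact ⟨x, y, z, w, hw, by push_cast; linear_combination h⟩

section NormForm

variable {R S : Type*} [CommRing R] [CommRing S]

/-- The reduced norm of `ℍ[R,-1,-3]` in the coordinates `re, imI, imJ, imK`. -/
def normForm (v : Fin 4 → R) : R := v 0 ^ 2 + v 1 ^ 2 + 3 * v 2 ^ 2 + 3 * v 3 ^ 2

def normBilin (u v : Fin 4 → R) : R := u 0 * v 0 + u 1 * v 1 + 3 * (u 2 * v 2) + 3 * (u 3 * v 3)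

/-- `normForm (a + √d • b) = 0`, split into its rational and irrational parts. -/
def IsNormZeroPair (d : R) (a b : Fin 4 → R) : Prop :=
  normForm a + d * normForm b = 0 ∧ normBilin a b = 0

theorem normForm_add_smul (a b : Fin 4 → R) (s : R) :
    normForm (a + s • b) = normForm a + 2 * s * normBilin a b + s ^ 2 * normForm b := by
  simp only [normForm, normBilin, Pi.add_apply, Pi.smul_apply, smul_eq_mul]
  ring

theorem isNormZeroPair_smul_iff [IsDomain R] {d c : R} (hc : c ≠ 0) {a b : Fin 4 → R} :
    IsNormZeroPair d (c • a) (c • b) ↔ IsNormZeroPair d a b := by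
  have h₁ : normForm (c • a) + d * normForm (c • b) = c ^ 2 * (normForm a + d * normForm b) := by
    simp only [normForm, Pi.smul_apply, smul_eq_mul]; ring
  have h₂ : normBilin (c • a) (c • b) = c ^ 2 * normBilin a b := by
    simp only [normBilin, Pi.smul_apply, smul_eq_mul]; ring
  simp only [IsNormZeroPair, h₁, h₂, mul_eq_zero, pow_eq_zero_iff two_ne_zero, hc, false_or]

theorem map_normForm (f : R →+* S) (v : Fin 4 → R) : f (normForm v) = normForm (f ∘ v) := by
  simp only [normForm, map_add, map_mul, map_pow, map_ofNat, Function.comp_apply]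

theorem map_normBilin (f : R →+* S) (u v : Fin 4 → R) :
    f (normBilin u v) = normBilin (f ∘ u) (f ∘ v) := by
  simp only [normBilin, map_add, map_mul, map_ofNat, Function.comp_apply]

theorem QuaternionAlgebra.mul_star_eq_normForm (x : ℍ[R,-1,-3]) :
    x * star x = (normForm (linearEquivTuple (-1) 0 (-3) x) : R) := by
  rw [mul_star_eq_coe, coe_inj]
  simp only [re_mul, re_star, imI_star, imJ_star, imK_star, normForm, coe_linearEquivTuple,
    equivTuple, Equiv.coe_fn_mk, Matrix.cons_val]
  ring

end NormForm

theorem QuaternionAlgebra.isUnit_iff_mul_star_ne_zero {K : Type*} [Field K] {c₁ c₂ c₃ : K}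
    {x : ℍ[K,c₁,c₂,c₃]} : IsUnit x ↔ x * star x ≠ 0 := by
  refine ⟨fun hx h => ?_, fun h => ?_⟩
  · have : star x = 0 := hx.mul_right_eq_zero.mp h
    rw [star_eq_zero] at this
    exact not_isUnit_zero (this ▸ hx)
  · obtain ⟨r, hr⟩ : ∃ r : K, x * star x = r := ⟨_, x.mul_star_eq_coe⟩
    have hr0 : r ≠ 0 := by rintro rfl; exact h (by simpa using hr)
    refine isUnit_iff_exists.mpr ⟨r⁻¹ • star x, ?_, ?_⟩
    · rw [mul_smul_comm, hr, smul_coe, inv_mul_cancel₀ hr0, coe_one]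
    · rw [smul_mul_assoc, star_comm_self', hr, smul_coe, inv_mul_cancel₀ hr0, coe_one]

theorem forall_ne_zero_isUnit_iff_normForm_eq_zero_imp {K : Type*} [Field K] :
    (∀ x : ℍ[K,-1,-3], x ≠ 0 → IsUnit x) ↔ ∀ v : Fin 4 → K, normForm v = 0 → v = 0 := by
  let e := QuaternionAlgebra.linearEquivTuple (R := K) (-1) 0 (-3)
  simp only [QuaternionAlgebra.isUnit_iff_mul_star_ne_zero, QuaternionAlgebra.mul_star_eq_normForm,
    ne_eq, ← QuaternionAlgebra.coe_zero, QuaternionAlgebra.coe_inj]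
  refine ⟨fun h v hv => ?_, fun h x hx hx0 => hx (e.map_eq_zero_iff.mp (h _ hx0))⟩
  by_contra hv0
  exact h (e.symm v) (by simpa using hv0) (by rwa [e.apply_symm_apply])

section QuadraticExtension

variable {F K : Type*} [Field F] [Field K] [Algebra F K] {d : F} {α : K}

theorem linearIndependent_one_of_sq_eq_of_not_isSquare (hd : ¬ IsSquare d)
    (hα : α ^ 2 = algebraMap F K d) : LinearIndependent F ![1, α] := by
  rw [LinearIndependent.pair_iff]
  intro s t hst
  rw [Algebra.smul_def, Algebra.smul_def, mul_one] at hst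
  by_cases ht : t = 0
  · subst ht
    simpa using hst
  · have htK : algebraMap F K t ≠ 0 := by simpa using ht
    have hαs : α = algebraMap F K (-s / t) := by
      rw [map_div₀, map_neg, eq_div_iff htK]
      linear_combination hst
    exact absurd ⟨-s / t, (algebraMap F K).injective (by rw [map_mul, ← hαs, ← sq, hα])⟩ hd

theorem exists_eq_algebraMap_add_algebraMap_mul (hrank : Module.finrank F K = 2)
    (hli : LinearIndependent F ![1, α]) (x : K) :
    ∃ a b : F, x = algebraMap F K a + algebraMap F K b * α := by
  let B := basisOfLinearIndependentOfCardEqFinrank hli (by simp [hrank])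
  refine ⟨B.repr x 0, B.repr x 1, ?_⟩
  conv_lhs => rw [← B.sum_repr x]
  simp [B, Fin.sum_univ_two, Algebra.smul_def]

theorem eq_zero_of_normForm_eq_zero [NeZero (2 : F)] (hrank : Module.finrank F K = 2)
    (hd : ¬ IsSquare d) (hα : α ^ 2 = algebraMap F K d)
    (h : ∀ a b : Fin 4 → F, IsNormZeroPair d a b → a = 0 ∧ b = 0) {v : Fin 4 → K}
    (hv : normForm v = 0) : v = 0 := by
  have hli := linearIndependent_one_of_sq_eq_of_not_isSquare hd hα
  choose a b hab using fun i => exists_eq_algebraMap_add_algebraMap_mul hrank hli (v i)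
  have key : (normForm a + d * normForm b) • (1 : K) + (2 * normBilin a b) • α = normForm v := by
    simp only [Algebra.smul_def, normForm, normBilin, hab, map_add, map_mul, map_pow, map_ofNat]
    linear_combination (-(algebraMap F K (b 0) ^ 2 + algebraMap F K (b 1) ^ 2 +
      3 * algebraMap F K (b 2) ^ 2 + 3 * algebraMap F K (b 3) ^ 2)) * hα
  obtain ⟨h₁, h₂⟩ := LinearIndependent.pair_iff.mp hli _ _ (key.trans hv)
  obtain ⟨rfl, rfl⟩ := h a b ⟨h₁, (mul_eq_zero.mp h₂).resolve_left two_ne_zero⟩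
  funext i
  simp [hab]

end QuadraticExtension

theorem IsNormZeroPair.eq_zero_of_int {d : ℤ}
    (h : ∀ a b : Fin 4 → ℤ, IsNormZeroPair d a b → a = 0 ∧ b = 0) {a b : Fin 4 → ℚ}
    (hab : IsNormZeroPair (d : ℚ) a b) : a = 0 ∧ b = 0 := by
  obtain ⟨⟨c, hc⟩, hint⟩ :=
    IsLocalization.exist_integer_multiples_of_finite (nonZeroDivisors ℤ) (Sum.elim a b)
  choose z hz using hint
  have hc0 : (c : ℚ) ≠ 0 := by exact_mod_cast nonZeroDivisors.ne_zero hc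
  have hza : Int.castRingHom ℚ ∘ (z ∘ Sum.inl) = (c : ℚ) • a := by
    funext i; simpa using hz (Sum.inl i)
  have hzb : Int.castRingHom ℚ ∘ (z ∘ Sum.inr) = (c : ℚ) • b := by
    funext i; simpa using hz (Sum.inr i)
  have hZ : IsNormZeroPair d (z ∘ Sum.inl) (z ∘ Sum.inr) := by
    rw [← isNormZeroPair_smul_iff hc0, ← hza, ← hzb] at hab
    obtain ⟨h₁, h₂⟩ := hab
    rw [← map_normForm, ← map_normForm] at h₁
    rw [← map_normBilin] at h₂
    simp only [Int.coe_castRingHom] at h₁ h₂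
    exact ⟨by exact_mod_cast h₁, by exact_mod_cast h₂⟩
  obtain ⟨ha, hb⟩ := h _ _ hZ
  rw [ha, eq_comm] at hza
  rw [hb, eq_comm] at hzb
  exact ⟨(smul_eq_zero.mp (by simpa using hza)).resolve_left hc0,
    (smul_eq_zero.mp (by simpa using hzb)).resolve_left hc0⟩

theorem Int.three_dvd_of_three_dvd_sq_add_sq {x y : ℤ} (h : 3 ∣ x ^ 2 + y ^ 2) :
    3 ∣ x ∧ 3 ∣ y := by
  have key : ∀ u v : ZMod 3, u ^ 2 + v ^ 2 = 0 → u = 0 ∧ v = 0 := by decide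
  have h' := (ZMod.intCast_zmod_eq_zero_iff_dvd (x ^ 2 + y ^ 2) 3).mpr h
  push_cast at h'
  obtain ⟨hx, hy⟩ := key _ _ h'
  exact ⟨(ZMod.intCast_zmod_eq_zero_iff_dvd x 3).mp hx,
    (ZMod.intCast_zmod_eq_zero_iff_dvd y 3).mp hy⟩

theorem three_dvd_of_nine_dvd_normForm {u : Fin 4 → ℤ} (h : 9 ∣ normForm u) (i : Fin 4) :
    3 ∣ u i := by
  obtain ⟨⟨c₀, hc₀⟩, ⟨c₁, hc₁⟩⟩ :=
    Int.three_dvd_of_three_dvd_sq_add_sq (x := u 0) (y := u 1) <| by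
      have : u 0 ^ 2 + u 1 ^ 2 = normForm u - 3 * (u 2 ^ 2 + u 3 ^ 2) := by
        simp only [normForm]; ring
      rw [this]
      exact ((dvd_mul_left 3 3).trans h).sub (dvd_mul_right _ _)
  obtain ⟨h₂, h₃⟩ := Int.three_dvd_of_three_dvd_sq_add_sq (x := u 2) (y := u 3) <| by
    have : 3 * (u 2 ^ 2 + u 3 ^ 2) = normForm u - 9 * (c₀ ^ 2 + c₁ ^ 2) := by
      simp only [normForm, hc₀, hc₁]; ring
    have : 9 ∣ 3 * (u 2 ^ 2 + u 3 ^ 2) := this ▸ h.sub (dvd_mul_right _ _)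
    omega
  fin_cases i
  exacts [⟨c₀, hc₀⟩, ⟨c₁, hc₁⟩, h₂, h₃]

theorem IsNormZeroPair.three_dvd {d : ℤ} (hd : d % 3 = 1) {a b : Fin 4 → ℤ}
    (h : IsNormZeroPair d a b) (i : Fin 4) : 3 ∣ a i ∧ 3 ∣ b i := by
  obtain ⟨s, ⟨k, hk⟩, hs3⟩ : ∃ s : ℤ, 9 ∣ s ^ 2 - d ∧ ¬ 3 ∣ s := by
    rcases (by omega : d % 9 = 1 ∨ d % 9 = 4 ∨ d % 9 = 7) with h | h | h
    exacts [⟨1, by omega, by decide⟩, ⟨2, by omega, by decide⟩, ⟨4, by omega, by decide⟩]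
  have key : ∀ t : ℤ, t ^ 2 = s ^ 2 → 3 ∣ a i + t * b i := fun t ht => by
    refine three_dvd_of_nine_dvd_normForm (u := a + t • b) ⟨k * normForm b, ?_⟩ i
    rw [normForm_add_smul, h.2, ht]
    linear_combination h.1 + normForm b * hk
  have hpos := key s rfl
  have hneg := key (-s) (neg_sq s)
  rw [neg_mul] at hneg
  have hsb : 3 ∣ s * b i := by omega
  exact ⟨by omega, (Int.prime_three.dvd_mul.mp hsb).resolve_left hs3⟩

theorem Int.eq_zero_of_forall_pow_dvd {n : ℤ} {m : ℕ} (hm : 1 < m)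
    (h : ∀ k : ℕ, (m : ℤ) ^ k ∣ n) : n = 0 :=
  eq_zero_of_dvd_of_natAbs_lt_natAbs (h n.natAbs) (by simpa using Nat.lt_pow_self hm)

theorem IsNormZeroPair.eq_zero {d : ℤ} (hd : d % 3 = 1) {a b : Fin 4 → ℤ}
    (h : IsNormZeroPair d a b) : a = 0 ∧ b = 0 := by
  have pow_dvd (k : ℕ) : ∀ a b : Fin 4 → ℤ, IsNormZeroPair d a b →
      ∀ i, 3 ^ k ∣ a i ∧ 3 ^ k ∣ b i := by
    induction k with
    | zero => simp
    | succ k ih =>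
      intro a b h i
      choose a' ha' using fun i => (h.three_dvd hd i).1
      choose b' hb' using fun i => (h.three_dvd hd i).2
      obtain rfl : a = (3 : ℤ) • a' := funext ha'
      obtain rfl : b = (3 : ℤ) • b' := funext hb'
      rw [isNormZeroPair_smul_iff three_ne_zero] at h
      simp only [Pi.smul_apply, smul_eq_mul, pow_succ']
      exact ⟨mul_dvd_mul_left 3 (ih _ _ h i).1, mul_dvd_mul_left 3 (ih _ _ h i).2⟩
  exact ⟨funext fun i => Int.eq_zero_of_forall_pow_dvd (m := 3) (by norm_num)
      fun k => (pow_dvd k a b h i).1,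
    funext fun i => Int.eq_zero_of_forall_pow_dvd (m := 3) (by norm_num)
      fun k => (pow_dvd k a b h i).2⟩

theorem eq_zero_of_normForm_eq_zero_of_mod_three_eq_one {K : Type*} [Field K] [Algebra ℚ K]
    (hrank : Module.finrank ℚ K = 2) {d : ℤ} (hdneg : d < 0) (hd3 : d % 3 = 1) {α : K}
    (hα : α ^ 2 = d) {v : Fin 4 → K} (hv : normForm v = 0) : v = 0 := by
  have hd : ¬ IsSquare (d : ℚ) := fun ⟨r, hr⟩ => by
    have : (d : ℚ) < 0 := by exact_mod_cast hdneg
    nlinarith [mul_self_nonneg r]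
  exact eq_zero_of_normForm_eq_zero hrank hd (by rw [hα, map_intCast])
    (fun a b hab => IsNormZeroPair.eq_zero_of_int (fun a b h => h.eq_zero hd3) hab) hv

theorem exists_ne_zero_normForm_eq_zero_of_mod_three_ne_one {K : Type*} [Field K] [CharZero K]
    {d : ℤ} (hd : Squarefree d) (hdneg : d < 0) (hd3 : d % 3 ≠ 1) {α : K} (hα : α ^ 2 = d) :
    ∃ v : Fin 4 → K, v ≠ 0 ∧ normForm v = 0 := by
  obtain ⟨x, y, z, w, hw, hxyzw⟩ :=
    exists_sq_add_sq_add_three_mul_sq_add_three_mul_mul_sq_eq_zero hd hdneg hd3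
  have hα0 : α ≠ 0 := by
    rintro rfl
    exact hdneg.ne (by exact_mod_cast (by simpa using hα.symm : (d : K) = 0))
  refine ⟨![x, y, z, w * α], fun h => mul_ne_zero (by exact_mod_cast hw) hα0 (congrFun h 3), ?_⟩
  have hK : (x : K) ^ 2 + y ^ 2 + 3 * z ^ 2 + 3 * d * w ^ 2 = 0 := by exact_mod_cast hxyzw
  simp only [normForm, Matrix.cons_val]
  linear_combination hK + 3 * (w : K) ^ 2 * hα

/-- Let `d` be a squarefree negative integer and `K = ℚ(√d)`
(i.e. a field extension of `ℚ` of degree 2 containing a square root of `d`).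
Then the quaternion algebra `(−1,−3/K)` is a division ring
if and only if `d ≡ 1 (mod 3)`. -/
theorem quaternion_neg_one_neg_three_division_iff_one_mod_three
    (d : ℤ) (hd : Squarefree d) (hdneg : d < 0)
    (K : Type) [Field K] [Algebra ℚ K]
    (hrank : Module.finrank ℚ K = 2) (α : K) (hα : α ^ 2 = (d : K)) :
    (∀ x : ℍ[K, -1, -3], x ≠ 0 → IsUnit x) ↔ d % 3 = 1 := by
  rw [forall_ne_zero_isUnit_iff_normForm_eq_zero_imp]
  refine ⟨fun h => ?_, fun hd3 _ => eq_zero_of_normForm_eq_zero_of_mod_three_eq_one hrank hdneg hd3 hα⟩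
  have : CharZero K := (RingHom.charZero_iff (algebraMap ℚ K).injective).mp inferInstance
  by_contra hd3
  obtain ⟨v, hv0, hv⟩ := exists_ne_zero_normForm_eq_zero_of_mod_three_ne_one hd hdneg hd3 hα
  exact hv0 (h v hv)
end

section
/- Let D₁₆⁻ be the semidihedral group of order 16 with presentation ⟨a, b | a⁸ = b² = 1, b a b⁻¹ = a³⟩ (equivalently, the semidirect product ℤ/8 ⋊ ℤ/2 where the generator of ℤ/2 acts on ℤ/8 by multiplication by 3). Then the rational group algebra ℚ[D₁₆⁻] is isomorphic as a ℚ-algebra to ℚ × ℚ × ℚ × ℚ × M₂(ℚ) × M₂(ℚ(√−2)). -/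
/-!
The model `ZMod 8 × ZMod 2` of the semidihedral group has the universal property of the
presentation, and since `G` has sixteen elements it is `G`. The four sign characters, the
rotation–reflection representation on `ℚ²`, and a two-dimensional representation over
`ℚ(√−2)`, in which `a` acts by the companion matrix of `X² − √−2 X − 1` (whose roots are the
primitive eighth roots of unity `ζ, ζ³`), assemble to an algebra map from `ℚ[G]` to the
product. It is onto: polynomials in the images of `a` and `b` give the central idempotents of
the six factors, the images generate each matrix factor, and `√−2` lies in the image in the
last one. Both sides have dimension `16`.
-/

open Module

theorem pow_mul_pow_of_mul_eq_pow_mul {M : Type*} [Monoid M] {x y : M} {r : ℕ}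
    (hxy : y * x = x ^ r * y) (j k : ℕ) : y ^ j * x ^ k = x ^ (r ^ j * k) * y ^ j := by
  have hy (k : ℕ) : SemiconjBy y (x ^ k) (x ^ (r * k)) := by
    simpa only [← pow_mul] using SemiconjBy.pow_right hxy k
  induction j generalizing k with
  | zero => simp
  | succ n ih =>
    rw [pow_succ, pow_succ, mul_assoc (r ^ n) r k]
    exact SemiconjBy.mul_left (ih (r * k)) (hy k)

theorem pow_val_natCast_of_pow_eq_one {M : Type*} [Monoid M] {x : M} {n : ℕ} (hx : x ^ n = 1)
    (k : ℕ) : x ^ (k : ZMod n).val = x ^ k := by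
  rw [ZMod.val_natCast, ← pow_eq_pow_mod _ hx]

theorem Algebra.adjoin_prod_eq_top {R A B : Type*} [CommRing R] [Ring A] [Ring B] [Algebra R A]
    [Algebra R B] {s : Set (A × B)} (h : ((1, 0) : A × B) ∈ Algebra.adjoin R s)
    (hA : Algebra.adjoin R (Prod.fst '' s) = ⊤) (hB : Algebra.adjoin R (Prod.snd '' s) = ⊤) :
    Algebra.adjoin R s = ⊤ := by
  refine Algebra.eq_top_iff.2 fun z => ?_
  have hfst : z.1 ∈ (Algebra.adjoin R s).map (AlgHom.fst R A B) := by
    rw [AlgHom.map_adjoin]; exact hA ▸ trivial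
  have hsnd : z.2 ∈ (Algebra.adjoin R s).map (AlgHom.snd R A B) := by
    rw [AlgHom.map_adjoin]; exact hB ▸ trivial
  obtain ⟨p, hp, hpz⟩ := hfst
  obtain ⟨q, hq, hqz⟩ := hsnd
  have hz : z = (1, 0) * p + (1 - (1, 0)) * q := by
    refine Prod.ext ?_ ?_ <;> simp [← hpz, ← hqz]
  rw [hz]
  exact add_mem (mul_mem h hp) (mul_mem (sub_mem (one_mem _) h) hq)

theorem Prod.one_zero_mem_of_algebraMap_zero_mem {F A B : Type*} [Field F] [Ring A] [Ring B]
    [Algebra F A] [Algebra F B] {S : Subalgebra F (A × B)} {c : F} (hc : c ≠ 0)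
    (h : (algebraMap F A c, (0 : B)) ∈ S) : ((1, 0) : A × B) ∈ S := by
  convert S.smul_mem h c⁻¹ using 1
  refine Prod.ext ?_ ?_ <;> simp [Algebra.smul_def, ← map_mul, hc]

theorem Prod.one_zero_mem_adjoin_of_sign {F B : Type*} [Field F] [CharZero F] [Ring B]
    [Algebra F B] {ε δ : F} (hε : ε ^ 2 = 1) (hδ : δ ^ 2 = 1) {x y : B}
    (h : (1 + ε • x) * (1 + δ • y) * (1 + x ^ 2) * (1 + x ^ 4) = 0) :
    ((1, 0) : F × B) ∈ Algebra.adjoin F {(ε, x), (δ, y)} := by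
  set S := Algebra.adjoin F {((ε, x) : F × B), (δ, y)}
  have hx : ((ε, x) : F × B) ∈ S := Algebra.subset_adjoin (by simp)
  have hy : ((δ, y) : F × B) ∈ S := Algebra.subset_adjoin (by simp)
  refine Prod.one_zero_mem_of_algebraMap_zero_mem (c := (16 : F)) (by norm_num) ?_
  have h16 : ((algebraMap F F 16, 0) : F × B) = (1 + ε • (ε, x)) * (1 + δ • (δ, y)) *
      (1 + (ε, x) ^ 2) * (1 + (ε, x) ^ 4) := by
    have hε4 : ε ^ 4 = 1 := by rw [show 4 = 2 * 2 from rfl, pow_mul, hε, one_pow]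
    ext
    · simp [← sq, hε, hδ, hε4]
      norm_num
    · simpa using h.symm
  rw [h16]
  exact mul_mem (mul_mem (mul_mem (add_mem (one_mem _) (Subalgebra.smul_mem _ hx _))
    (add_mem (one_mem _) (Subalgebra.smul_mem _ hy _))) (add_mem (one_mem _) (pow_mem hx _)))
    (add_mem (one_mem _) (pow_mem hx _))

theorem exists_eq_algebraMap_add_algebraMap_mul_of_finrank_eq_two {F K : Type*} [Field F]
    [Field K] [Algebra F K] (hK : finrank F K = 2) {β : K}
    (hβ : β ∉ Set.range (algebraMap F K)) (z : K) :
    ∃ u v : F, z = algebraMap F K u + algebraMap F K v * β := by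
  have hli : LinearIndependent F ![1, β] := by
    refine (LinearIndependent.pair_iff' one_ne_zero).2 fun q hq => hβ ⟨q, ?_⟩
    rw [← hq, Algebra.smul_def, mul_one]
  have : Module.Finite F K := Module.finite_of_finrank_eq_succ hK
  have hspan : Submodule.span F (Set.range ![1, β]) = ⊤ :=
    hli.span_eq_top_of_card_eq_finrank' (by simp [hK])
  obtain ⟨c, hc⟩ :=
    (Submodule.mem_span_range_iff_exists_fun F).1 (hspan ▸ Submodule.mem_top (x := z))
  exact ⟨c 0, c 1, by simp [← hc, Fin.sum_univ_two, Algebra.smul_def]⟩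

theorem Subalgebra.smul_mem_of_algebraMap_mem {F K B : Type*} [Field F] [Field K] [Ring B]
    [Algebra F K] [Algebra F B] [Algebra K B] [IsScalarTower F K B] (hK : finrank F K = 2)
    {β : K} (hβ : β ∉ Set.range (algebraMap F K)) {S : Subalgebra F B}
    (hβS : algebraMap K B β ∈ S) (k : K) {m : B} (hm : m ∈ S) : k • m ∈ S := by
  obtain ⟨u, v, rfl⟩ := exists_eq_algebraMap_add_algebraMap_mul_of_finrank_eq_two hK hβ k
  simp only [add_smul, mul_smul, algebraMap_smul]
  rw [Algebra.smul_def β m]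
  exact add_mem (S.smul_mem hm u) (S.smul_mem (mul_mem hβS hm) v)

namespace Matrix

section Rotation

variable {R : Type*} [CommRing R]

theorem rotation_sq : !![0, -1; 1, 0] ^ 2 = (-1 : Matrix (Fin 2) (Fin 2) R) := by
  rw [sq, mul_fin_two]
  ext i j
  fin_cases i <;> fin_cases j <;> simp

theorem rotation_pow_four : !![0, -1; 1, 0] ^ 4 = (1 : Matrix (Fin 2) (Fin 2) R) := by
  rw [show 4 = 2 * 2 from rfl, pow_mul, rotation_sq, neg_one_sq]

theorem reflection_mul_rotation : !![1, 0; 0, -1] * !![0, -1; 1, 0] =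
    !![0, -1; 1, 0] ^ 3 * (!![1, 0; 0, -1] : Matrix (Fin 2) (Fin 2) R) := by
  rw [pow_succ, rotation_sq]
  simp only [mul_fin_two]
  ext i j
  fin_cases i <;> fin_cases j <;> simp

end Rotation

section SqrtNegTwo

variable {R : Type*} [CommRing R] {β : R}

-- `!![0, 1; 1, β]` is the companion matrix of `X ^ 2 - β X - 1`.
theorem companion_sq (hβ : β ^ 2 = -2) : !![0, 1; 1, β] ^ 2 = !![1, β; β, -1] := by
  rw [sq, mul_fin_two]
  ext i j
  fin_cases i <;> fin_cases j <;> norm_num [← sq, hβ]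

theorem companion_pow_four (hβ : β ^ 2 = -2) : !![0, 1; 1, β] ^ 4 = -1 := by
  rw [show 4 = 2 * 2 from rfl, pow_mul, companion_sq hβ, sq, mul_fin_two]
  ext i j
  fin_cases i <;> fin_cases j <;> simp <;> grind

theorem companion_add_pow_three (hβ : β ^ 2 = -2) :
    !![0, 1; 1, β] + !![0, 1; 1, β] ^ 3 = algebraMap R (Matrix (Fin 2) (Fin 2) R) β := by
  rw [pow_succ, companion_sq hβ, mul_fin_two]
  ext i j
  fin_cases i <;> fin_cases j <;> norm_num [algebraMap_matrix_apply, ← sq, hβ]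

theorem twisted_reflection_sq : !![1, 0; β, -1] ^ 2 = (1 : Matrix (Fin 2) (Fin 2) R) := by
  rw [sq, mul_fin_two]
  ext i j
  fin_cases i <;> fin_cases j <;> simp

theorem twisted_reflection_mul_companion (hβ : β ^ 2 = -2) :
    !![1, 0; β, -1] * !![0, 1; 1, β] = !![0, 1; 1, β] ^ 3 * !![1, 0; β, -1] := by
  rw [pow_succ, companion_sq hβ]
  simp only [mul_fin_two]
  ext i j
  fin_cases i <;> fin_cases j <;> simp <;> grind

end SqrtNegTwo

theorem adjoin_rotation_reflection_eq_top {F : Type*} [Field F] [NeZero (2 : F)] :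
    Algebra.adjoin F {!![0, -1; 1, 0], !![1, 0; 0, -1]} =
      (⊤ : Subalgebra F (Matrix (Fin 2) (Fin 2) F)) := by
  set S := Algebra.adjoin F {(!![0, -1; 1, 0] : Matrix (Fin 2) (Fin 2) F), !![1, 0; 0, -1]}
  have hR : !![0, -1; 1, 0] ∈ S := Algebra.subset_adjoin (by simp)
  have hD : !![1, 0; 0, -1] ∈ S := Algebra.subset_adjoin (by simp)
  refine Algebra.eq_top_iff.2 fun m => ?_
  have hm : m = ((m 0 0 + m 1 1) / 2) • 1 + ((m 1 0 - m 0 1) / 2) • !![0, -1; 1, 0] +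
      ((m 0 0 - m 1 1) / 2) • !![1, 0; 0, -1] +
      ((m 0 1 + m 1 0) / 2) • (!![0, -1; 1, 0] * !![1, 0; 0, -1]) := by
    ext i j
    fin_cases i <;> fin_cases j <;> simp <;> field_simp <;> ring
  rw [hm]
  exact add_mem (add_mem (add_mem (S.smul_mem (one_mem S) _) (S.smul_mem hR _))
    (S.smul_mem hD _)) (S.smul_mem (mul_mem hR hD) _)

theorem adjoin_companion_twisted_reflection_eq_top {K : Type*} [Field K] [Algebra ℚ K]
    (hK : finrank ℚ K = 2) {β : K} (hβ : β ^ 2 = -2) :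
    Algebra.adjoin ℚ {!![0, 1; 1, β], !![1, 0; β, -1]} =
      (⊤ : Subalgebra ℚ (Matrix (Fin 2) (Fin 2) K)) := by
  have : CharZero K := charZero_of_injective_algebraMap (algebraMap ℚ K).injective
  set S := Algebra.adjoin ℚ {(!![0, 1; 1, β] : Matrix (Fin 2) (Fin 2) K), !![1, 0; β, -1]}
  have hM : !![0, 1; 1, β] ∈ S := Algebra.subset_adjoin (by simp)
  have hN : !![1, 0; β, -1] ∈ S := Algebra.subset_adjoin (by simp)
  have hβQ : β ∉ Set.range (algebraMap ℚ K) := by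
    rintro ⟨q, rfl⟩
    have hq : q ^ 2 = -2 := (algebraMap ℚ K).injective (by simpa using hβ)
    nlinarith [sq_nonneg q]
  -- `S` contains `β = M + M³`, hence is a `K`-subspace, and `1, M, N, N M` span over `K`.
  have hβS : algebraMap K _ β ∈ S := companion_add_pow_three hβ ▸ add_mem hM (pow_mem hM 3)
  have hsmul (k : K) {m} (hm : m ∈ S) : k • m ∈ S :=
    Subalgebra.smul_mem_of_algebraMap_mem hK hβQ hβS k hm
  refine Algebra.eq_top_iff.2 fun m => ?_
  set b := m 0 1 + m 1 0 - β * (m 0 0 - m 1 1) / 2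
  set c := m 0 0 - m 1 1 + β * (m 0 1 + m 1 0) / 2
  have hm : m = (m 0 0 - c) • 1 + b • !![0, 1; 1, β] + c • !![1, 0; β, -1] +
      (m 0 1 - b) • (!![1, 0; β, -1] * !![0, 1; 1, β]) := by
    ext i j
    fin_cases i <;> fin_cases j <;> simp [b, c] <;> grind
  rw [hm]
  exact add_mem (add_mem (add_mem (hsmul _ (one_mem S)) (hsmul _ hM)) (hsmul _ hN))
    (hsmul _ (mul_mem hN hM))

end Matrix

theorem MonoidAlgebra.nonempty_algEquiv_of_adjoin_range_eq_top {F G A : Type*} [Field F]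
    [Monoid G] [Fintype G] [Ring A] [Algebra F A] (hdim : finrank F A = Fintype.card G)
    (ρ : G →* A) (hρ : Algebra.adjoin F (Set.range ρ) = ⊤) :
    Nonempty (MonoidAlgebra F G ≃ₐ[F] A) := by
  have : Nonempty G := ⟨1⟩
  have : Module.Finite F A := Module.finite_of_finrank_pos (hdim ▸ Fintype.card_pos)
  set L := MonoidAlgebra.lift F A G ρ
  have hsurj : Function.Surjective L := by
    rw [← AlgHom.range_eq_top, eq_top_iff, ← hρ, Algebra.adjoin_le_iff]
    rintro _ ⟨g, rfl⟩
    exact ⟨MonoidAlgebra.single g 1, by simp [L]⟩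
  have hdim' : finrank F (MonoidAlgebra F G) = finrank F A := by
    rw [hdim, (MonoidAlgebra.coeffLinearEquiv F).finrank_eq, Module.finrank_finsupp_self]
  exact ⟨AlgEquiv.ofBijective L
    ⟨(LinearMap.injective_iff_surjective_of_finrank_eq_finrank hdim' (f := L.toLinearMap)).2
      hsurj, hsurj⟩⟩

def Semidihedral16 : Type := ZMod 8 × ZMod 2

namespace Semidihedral16

instance : Fintype Semidihedral16 := inferInstanceAs (Fintype (ZMod 8 × ZMod 2))
instance : DecidableEq Semidihedral16 := inferInstanceAs (DecidableEq (ZMod 8 × ZMod 2))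

/-- `(i, j)` stands for `a ^ i * b ^ j`. -/
instance : Group Semidihedral16 where
  mul g h := (g.1 + 3 ^ g.2.val * h.1, g.2 + h.2)
  one := (0, 0)
  inv g := (-(3 ^ g.2.val * g.1), g.2)
  mul_assoc := by decide
  one_mul := by decide
  mul_one := by decide
  inv_mul_cancel := by decide

theorem card : Fintype.card Semidihedral16 = 16 := rfl

section Lift

variable {M : Type*} [Monoid M] {x y : M}

def lift (hx : x ^ 8 = 1) (hy : y ^ 2 = 1) (hxy : y * x = x ^ 3 * y) :
    Semidihedral16 →* M where
  toFun g := x ^ g.1.val * y ^ g.2.val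
  map_one' := by simp [show (1 : Semidihedral16) = (0, 0) from rfl]
  map_mul' g h := by
    obtain ⟨i, j⟩ := g
    obtain ⟨i', j'⟩ := h
    have hi : i + 3 ^ j.val * i' = ((i.val + 3 ^ j.val * i'.val : ℕ) : ZMod 8) := by
      simp [ZMod.natCast_val, ZMod.cast_id]
    have hj : j + j' = ((j.val + j'.val : ℕ) : ZMod 2) := by
      simp [ZMod.natCast_val, ZMod.cast_id]
    change x ^ (i + 3 ^ j.val * i').val * y ^ (j + j').val
      = x ^ i.val * y ^ j.val * (x ^ i'.val * y ^ j'.val)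
    rw [hi, hj, pow_val_natCast_of_pow_eq_one hx, pow_val_natCast_of_pow_eq_one hy, pow_add,
      pow_add, mul_assoc (x ^ i.val) (y ^ j.val), ← mul_assoc (y ^ j.val),
      pow_mul_pow_of_mul_eq_pow_mul hxy]
    simp only [mul_assoc]

variable (hx : x ^ 8 = 1) (hy : y ^ 2 = 1) (hxy : y * x = x ^ 3 * y)

theorem lift_one_zero : lift hx hy hxy (1, 0) = x := by
  change x ^ 1 * y ^ 0 = x
  simp

theorem lift_zero_one : lift hx hy hxy (0, 1) = y := by
  change x ^ 0 * y ^ 1 = y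
  simp

end Lift

theorem exists_monoidHom_of_generators {G : Type*} [Group G] [Fintype G] (hcard : Fintype.card G = 16)
    {a b : G} (ha : a ^ 8 = 1) (hb : b ^ 2 = 1) (hab : b * a = a ^ 3 * b)
    (hgen : Subgroup.closure {a, b} = ⊤) {M : Type*} [Monoid M] {x y : M} (hx : x ^ 8 = 1)
    (hy : y ^ 2 = 1) (hxy : y * x = x ^ 3 * y) : ∃ f : G →* M, f a = x ∧ f b = y := by
  set φ := lift ha hb hab
  have hφa : φ (1, 0) = a := lift_one_zero ha hb hab
  have hφb : φ (0, 1) = b := lift_zero_one ha hb hab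
  have hsurj : Function.Surjective φ := by
    rw [← MonoidHom.range_eq_top, eq_top_iff, ← hgen, Subgroup.closure_le]
    rintro _ (rfl | rfl)
    exacts [⟨_, hφa⟩, ⟨_, hφb⟩]
  have hbij : Function.Bijective φ :=
    (Fintype.bijective_iff_surjective_and_card φ).2 ⟨hsurj, by rw [card, hcard]⟩
  set e := MulEquiv.ofBijective φ hbij
  refine ⟨(lift hx hy hxy).comp e.symm.toMonoidHom, ?_, ?_⟩
  · rw [MonoidHom.comp_apply, MulEquiv.coe_toMonoidHom, e.symm_apply_eq.2 hφa.symm]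
    exact lift_one_zero hx hy hxy
  · rw [MonoidHom.comp_apply, MulEquiv.coe_toMonoidHom, e.symm_apply_eq.2 hφb.symm]
    exact lift_zero_one hx hy hxy

variable {K : Type*} [Field K] {β : K}

-- The images of `a` and `b` in the six factors.
variable (β) in
def genA : ℚ × ℚ × ℚ × ℚ × Matrix (Fin 2) (Fin 2) ℚ × Matrix (Fin 2) (Fin 2) K :=
  (1, 1, -1, -1, !![0, -1; 1, 0], !![0, 1; 1, β])

variable (β) in
def genB : ℚ × ℚ × ℚ × ℚ × Matrix (Fin 2) (Fin 2) ℚ × Matrix (Fin 2) (Fin 2) K :=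
  (1, -1, 1, -1, !![1, 0; 0, -1], !![1, 0; β, -1])

theorem genA_pow_four (hβ : β ^ 2 = -2) : genA β ^ 4 = (1, 1, 1, 1, 1, -1) := by
  simp only [genA, Prod.pow_mk, Matrix.rotation_pow_four, Matrix.companion_pow_four hβ]
  norm_num

theorem genA_pow_eight (hβ : β ^ 2 = -2) : genA β ^ 8 = 1 := by
  rw [show 8 = 4 * 2 from rfl, pow_mul, genA_pow_four hβ]
  simp [Prod.pow_mk]

theorem genB_sq : genB β ^ 2 = 1 := by
  simp only [genB, Prod.pow_mk, Matrix.twisted_reflection_sq]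
  norm_num

theorem genB_mul_genA (hβ : β ^ 2 = -2) : genB β * genA β = genA β ^ 3 * genB β := by
  simp only [genA, genB, Prod.pow_mk, Prod.mk_mul_mk, Matrix.reflection_mul_rotation,
    Matrix.twisted_reflection_mul_companion hβ]
  norm_num

theorem adjoin_genA_genB_eq_top [Algebra ℚ K] (hK : finrank ℚ K = 2) (hβ : β ^ 2 = -2) :
    Algebra.adjoin ℚ {genA β, genB β} = ⊤ := by
  have hQ (s : Set ℚ) : Algebra.adjoin ℚ s = ⊤ := Subsingleton.elim _ _
  have h2 := Matrix.rotation_sq (R := ℚ)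
  have h4 := Matrix.rotation_pow_four (R := ℚ)
  have h4' := Matrix.companion_pow_four hβ
  unfold genA genB
  -- Split off the sign characters; `(1 + x ^ 2) * (1 + x ^ 4)` vanishes on the matrix factors.
  iterate 4
    refine Algebra.adjoin_prod_eq_top
      (Prod.one_zero_mem_adjoin_of_sign (by norm_num) (by norm_num) ?_) (hQ _) ?_
    · simp [Prod.ext_iff, Prod.pow_mk, h2, h4, h4']
    rw [Set.image_pair]
  refine Algebra.adjoin_prod_eq_top ?_ ?_ ?_
  · refine Prod.one_zero_mem_of_algebraMap_zero_mem (c := 2) two_ne_zero ?_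
    have h : ((algebraMap ℚ _ 2, 0) : Matrix (Fin 2) (Fin 2) ℚ × Matrix (Fin 2) (Fin 2) K) =
        1 + (!![0, -1; 1, 0], !![0, 1; 1, β]) ^ 4 := by
      simp [Prod.ext_iff, Prod.pow_mk, h4, h4', map_ofNat, one_add_one_eq_two]
    rw [h]
    exact add_mem (one_mem _) (pow_mem (Algebra.subset_adjoin (by simp)) 4)
  · rw [Set.image_pair]
    exact Matrix.adjoin_rotation_reflection_eq_top
  · rw [Set.image_pair]
    exact Matrix.adjoin_companion_twisted_reflection_eq_top hK hβ

theorem finrank_wedderburn_factors_eq_sixteen [Algebra ℚ K] (hK : finrank ℚ K = 2) :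
    finrank ℚ (ℚ × ℚ × ℚ × ℚ × Matrix (Fin 2) (Fin 2) ℚ × Matrix (Fin 2) (Fin 2) K) =
      16 := by
  have : Module.Finite ℚ K := Module.finite_of_finrank_eq_succ hK
  simp [Module.finrank_prod, Module.finrank_matrix, hK]

end Semidihedral16

/-- Let `D₁₆⁻` be the semidihedral group of order 16 with
presentation `⟨a, b | a⁸ = b² = 1, b a b⁻¹ = a³⟩` (any group of order 16
generated by such `a, b` is this group). Then `ℚ[D₁₆⁻]` is isomorphic as a
`ℚ`-algebra to `ℚ × ℚ × ℚ × ℚ × M₂(ℚ) × M₂(ℚ(√−2))`, where `ℚ(√−2)` is (any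
realization of) the quadratic field obtained by adjoining a square root of `−2`
to `ℚ`. -/
theorem rational_group_algebra_semidihedral_sixteen_minus
    (G : Type) [Group G] [Fintype G] (hcard : Fintype.card G = 16)
    (a b : G) (ha : a ^ 8 = 1) (hb : b ^ 2 = 1) (hrel : b * a * b⁻¹ = a ^ 3)
    (hgen : Subgroup.closure {a, b} = ⊤)
    (K : Type) [Field K] [Algebra ℚ K] (hK : Module.finrank ℚ K = 2)
    (β : K) (hβ : β ^ 2 = -2) :
    Nonempty (MonoidAlgebra ℚ G ≃ₐ[ℚ]
      (ℚ × ℚ × ℚ × ℚ × Matrix (Fin 2) (Fin 2) ℚ × Matrix (Fin 2) (Fin 2) K)) := by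
  have hab : b * a = a ^ 3 * b := by rw [← hrel, inv_mul_cancel_right]
  obtain ⟨ρ, hρa, hρb⟩ := Semidihedral16.exists_monoidHom_of_generators hcard ha hb hab hgen
    (Semidihedral16.genA_pow_eight hβ) Semidihedral16.genB_sq (Semidihedral16.genB_mul_genA hβ)
  refine MonoidAlgebra.nonempty_algEquiv_of_adjoin_range_eq_top
    (by rw [Semidihedral16.finrank_wedderburn_factors_eq_sixteen hK, hcard]) ρ (eq_top_iff.2 ?_)
  rw [← Semidihedral16.adjoin_genA_genB_eq_top hK hβ]
  refine Algebra.adjoin_mono ?_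
  rintro _ (rfl | rfl)
  exacts [⟨a, hρa⟩, ⟨b, hρb⟩]
end

section
/- Let G be a finite group and A an abelian subgroup of G such that every subgroup of A is normal in G. Let ℋ be the family of subgroups H of A such that A/H is cyclic and the commutator subgroup of G is not contained in H. Then for every noncommutative simple ring B: B is a quotient of ℚG (i.e., there is a surjective ring homomorphism ℚG → B) if and only if there exists H ∈ ℋ such that B is a quotient of ℚ[G/H]. -/
/-!
Let `f : ℚ[G] → B` be surjective with `B` simple. For a normal subgroup `N`, the averaging
idempotent `e_N = |N|⁻¹ ∑_{n ∈ N} n` is central, so `f e_N` is a central idempotent of `B`, hence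
`0` or `1`: either `N` maps to `1` in `Bˣ`, or the images of the elements of `N` sum to zero.
Applied to the cyclic subgroups of `A`, which are normal, this shows that every `u ≠ 1` in the
image of `A` in `Bˣ` with `u ^ p = 1` satisfies `1 + u + ⋯ + u ^ (p - 1) = 0`. If this image had
two different subgroups of order `p`, adding these relations over the subgroups of order `p` of
their product would give `p = 0` in `B`. So the image of `A`, which is `A / (A ⊓ ker)`, is cyclic,
and `H = A ⊓ ker` works: `f` factors through `ℚ[G ⧸ H]`, which cannot be commutative since `B`
is not. The converse is composition with `ℚ[G] → ℚ[G ⧸ H]`.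
-/

open Finset MonoidAlgebra Subgroup

theorem IsSimpleRing.eq_zero_or_one_of_isIdempotentElem {B : Type*} [Ring B] [IsSimpleRing B]
    {e : B} (he : IsIdempotentElem e) (hc : e ∈ Subring.center B) : e = 0 ∨ e = 1 := by
  let := (IsSimpleRing.isField_center B).toField
  have : IsIdempotentElem (⟨e, hc⟩ : Subring.center B) := Subtype.ext he
  simpa [Subtype.ext_iff] using IsIdempotentElem.iff_eq_zero_or_one.1 this

theorem RingHom.map_mem_center_of_surjective {R S : Type*} [Ring R] [Ring S] (f : R →+* S)
    (hf : Function.Surjective f) {x : R} (hx : x ∈ Subring.center R) :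
    f x ∈ Subring.center S := by
  refine Subring.mem_center_iff.2 fun s ↦ ?_
  obtain ⟨r, rfl⟩ := hf s
  rw [← map_mul, ← map_mul, Subring.mem_center_iff.1 hx r]

theorem RingHom.isUnit_natCast {K B : Type*} [DivisionRing K] [CharZero K] [Semiring B]
    (g : K →+* B) {n : ℕ} (hn : n ≠ 0) : IsUnit (n : B) := by
  simpa using (IsUnit.mk0 (n : K) (Nat.cast_ne_zero.2 hn)).map g

theorem geom_sum_mul_eq_nsmul_of_pow_eq_one {B : Type*} [Semiring B] {z : B} {r : ℕ}
    (hz : z ^ r = 1) (m : ℕ) : ∑ j ∈ range (r * m), z ^ j = m • ∑ j ∈ range r, z ^ j := by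
  induction m with
  | zero => simp
  | succ m ih =>
    rw [mul_add_one, sum_range_add, ih, succ_nsmul]
    simp [pow_add, pow_mul, hz]

theorem natCast_eq_zero_of_geom_sum_eq_zero {B : Type*} [Ring B] {x y : B} {n : ℕ}
    (hxy : Commute x y) (hx : ∀ i < n, ∑ j ∈ range n, (x * y ^ i) ^ j = 0)
    (hy : ∀ j, 0 < j → j < n → ∑ i ∈ range n, (y ^ j) ^ i = 0) : (n : B) = 0 := by
  have hsum : ∑ j ∈ range n, x ^ j * ∑ i ∈ range n, (y ^ j) ^ i = 0 := by
    rw [← sum_eq_zero fun i hi ↦ hx i (mem_range.1 hi), sum_comm]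
    refine sum_congr rfl fun j _ ↦ ?_
    rw [mul_sum]
    refine sum_congr rfl fun i _ ↦ ?_
    rw [(hxy.pow_right i).mul_pow, ← pow_mul, ← pow_mul, mul_comm]
  -- only the term `j = 0` survives, and it is `∑ i < n, 1 = n`
  cases n with
  | zero => simp
  | succ m =>
    rw [sum_range_succ', sum_eq_zero fun j hj ↦ by
      rw [hy (j + 1) j.succ_pos (by simpa using mem_range.1 hj), mul_zero], zero_add] at hsum
    simpa using hsum

theorem card_ker_powMonoidHom_prime_le {D : Type*} [CommGroup D] [Finite D] {p : ℕ}
    (hp : p.Prime) (h : ∀ x y : D, orderOf y = p → x ^ p = 1 → x ∈ zpowers y) :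
    Nat.card (powMonoidHom p : D →* D).ker ≤ p := by
  by_cases hbot : (powMonoidHom p : D →* D).ker = ⊥
  · simp [hbot, hp.one_le]
  obtain ⟨⟨y, hy⟩, hy1⟩ := ne_bot_iff_exists_ne_one.1 hbot
  have hord : orderOf y = p := by
    have := Fact.mk hp
    exact orderOf_eq_prime hy (by simpa using hy1)
  calc Nat.card (powMonoidHom p : D →* D).ker ≤ Nat.card (zpowers y) :=
        Subgroup.card_le_of_le fun x hx ↦ h x y hord hx
    _ = p := by rw [Nat.card_zpowers, hord]

theorem card_ker_powMonoidHom_le {D : Type*} [CommGroup D] [Finite D]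
    (h : ∀ p : ℕ, p.Prime → ∀ x y : D, orderOf y = p → x ^ p = 1 → x ∈ zpowers y) {n : ℕ}
    (hn : 0 < n) : Nat.card (powMonoidHom n : D →* D).ker ≤ n := by
  induction n using Nat.strong_induction_on with
  | _ n ih =>
  obtain rfl | hn1 := eq_or_ne n 1
  · simp
  have hp := Nat.minFac_prime hn1
  obtain ⟨m, hnm⟩ := n.minFac_dvd
  generalize n.minFac = p at hp hnm
  subst hnm
  have hm : 0 < m := Nat.pos_of_mul_pos_left hn
  -- `x ↦ x ^ m` maps the `p * m`-torsion into the `p`-torsion, with kernel the `m`-torsion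
  let ψ := (powMonoidHom m : D →* D).comp (powMonoidHom (p * m) : D →* D).ker.subtype
  have hker : Nat.card ψ.ker ≤ Nat.card (powMonoidHom m : D →* D).ker :=
    Nat.card_le_card_of_injective (fun x ↦ ⟨x.1.1, x.2⟩) fun x y hxy ↦
      Subtype.ext (Subtype.ext (congrArg Subtype.val hxy :))
  have hrange : Nat.card ψ.range ≤ Nat.card (powMonoidHom p : D →* D).ker := by
    refine Subgroup.card_le_of_le ?_
    rintro _ ⟨x, rfl⟩
    change ((x : D) ^ m) ^ p = 1
    rw [← pow_mul, mul_comm m]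
    exact x.2
  calc Nat.card (powMonoidHom (p * m) : D →* D).ker = Nat.card ψ.ker * Nat.card ψ.range := by
        rw [← ψ.ker.card_mul_index, Subgroup.index_ker]
    _ ≤ m * p := Nat.mul_le_mul (hker.trans (ih m (lt_mul_left hm hp.one_lt) hm))
        (hrange.trans (card_ker_powMonoidHom_prime_le hp (h p hp)))
    _ = p * m := mul_comm _ _

theorem isCyclic_of_pow_prime_eq_one_mem_zpowers {D : Type*} [CommGroup D] [Finite D]
    (h : ∀ p : ℕ, p.Prime → ∀ x y : D, orderOf y = p → x ^ p = 1 → x ∈ zpowers y) :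
    IsCyclic D := by
  classical
  have := Fintype.ofFinite D
  refine isCyclic_of_card_pow_eq_one_le fun n hn ↦ ?_
  convert card_ker_powMonoidHom_le h hn
  rw [Nat.card_eq_fintype_card, Fintype.card_subtype]
  simp

namespace MonoidAlgebra

theorem mapDomain_surjective {R M N : Type*} [Semiring R] {f : M → N}
    (hf : Function.Surjective f) : Function.Surjective (mapDomain (R := R) f) := fun y ↦ by
  obtain ⟨c, hc⟩ := Finsupp.mapDomain_surjective hf y.coeff
  exact ⟨ofCoeff c, by ext; simp [mapDomain, hc]⟩

section Average

variable (k : Type*) {G : Type*} [Field k] [Group G] (N : Subgroup G) [Fintype N]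

noncomputable def subgroupAverage : k[G] := (Fintype.card N : k)⁻¹ • ∑ n : N, of k G n

variable {k N}

theorem of_mul_subgroupAverage {n : G} (hn : n ∈ N) :
    of k G n * subgroupAverage k N = subgroupAverage k N := by
  rw [subgroupAverage, mul_smul_comm, mul_sum]
  congr 1
  exact Fintype.sum_equiv (Equiv.mulLeft ⟨n, hn⟩) _ _ fun m ↦ by simp

theorem isIdempotentElem_subgroupAverage [CharZero k] :
    IsIdempotentElem (subgroupAverage k N) := by
  rw [IsIdempotentElem]
  nth_rw 1 [subgroupAverage]
  rw [smul_mul_assoc, sum_mul, sum_congr rfl fun n _ ↦ of_mul_subgroupAverage n.2, sum_const,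
    card_univ, ← Nat.cast_smul_eq_nsmul k, smul_smul, inv_mul_cancel₀ (by simp), one_smul]

theorem natCast_card_mul_subgroupAverage [CharZero k] :
    (Fintype.card N : k[G]) * subgroupAverage k N = ∑ n : N, of k G n := by
  rw [subgroupAverage, mul_smul_comm, ← nsmul_eq_mul, ← Nat.cast_smul_eq_nsmul k, smul_smul,
    inv_mul_cancel₀ (by simp), one_smul]

theorem subgroupAverage_mem_center [N.Normal] : subgroupAverage k N ∈ Subring.center k[G] := by
  have hof : ∀ g : G, Commute (of k G g) (subgroupAverage k N) := fun g ↦ by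
    simp only [Commute, SemiconjBy, subgroupAverage, mul_smul_comm, smul_mul_assoc, mul_sum,
      sum_mul]
    congr 1
    refine Fintype.sum_equiv (MulAut.conjNormal g).toEquiv _ _ fun n ↦ ?_
    simp [MulAut.conjNormal_apply]
  refine Subring.mem_center_iff.2 fun x ↦ ?_
  induction x using MonoidAlgebra.induction_on with
  | of g => exact hof g
  | add x y hx hy => rw [add_mul, mul_add, hx, hy]
  | smul r x hx => rw [smul_mul_assoc, mul_smul_comm, hx]

end Average

open scoped IsMulCommutative in
theorem mul_comm_of_surjective {k Q B : Type*} [CommSemiring k] [Monoid Q] [IsMulCommutative Q]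
    [Semiring B] (F : k[Q] →+* B) (hF : Function.Surjective F) (u v : B) : u * v = v * u := by
  obtain ⟨s, rfl⟩ := hF u
  obtain ⟨t, rfl⟩ := hF v
  rw [← map_mul, ← map_mul, mul_comm s t]

section SimpleQuotient

variable {k G B : Type*} [Field k] [Group G] [Ring B]

noncomputable def unitsHom (f : k[G] →+* B) : G →* Bˣ :=
  ((f : k[G] →* B).comp (of k G)).toHomUnits

@[simp]
theorem coe_unitsHom_apply (f : k[G] →+* B) (g : G) : (unitsHom f g : B) = f (of k G g) := rfl

theorem exists_ringHom_comp_mapDomainRingHom_eq (f : k[G] →+* B) (N : Subgroup G) [N.Normal]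
    (hN : N ≤ (unitsHom f).ker) :
    ∃ F : k[G ⧸ N] →+* B, F.comp (mapDomainRingHom k (QuotientGroup.mk' N)) = f := by
  let χ : G ⧸ N →* B := (Units.coeHom B).comp (QuotientGroup.lift N (unitsHom f) hN)
  have hcomm : ∀ (r : k) (x : G ⧸ N), Commute ((f.comp singleOneRingHom) r) (χ x) := by
    intro r x
    obtain ⟨g, rfl⟩ := QuotientGroup.mk_surjective x
    change f (single 1 r) * f (single g 1) = f (single g 1) * f (single 1 r)
    rw [← map_mul, ← map_mul, single_one_comm]
  refine ⟨liftNCRingHom (f.comp singleOneRingHom) χ hcomm, ringHom_ext (fun r ↦ ?_) fun g ↦ ?_⟩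
  · simp [χ]
  · simp [χ, ← one_def]

variable [CharZero k] [IsSimpleRing B] {f : k[G] →+* B} (hf : Function.Surjective f)
include hf

theorem le_ker_unitsHom_or_sum_eq_zero (N : Subgroup G) [Fintype N] [N.Normal] :
    N ≤ (unitsHom f).ker ∨ ∑ n : N, f (of k G n) = 0 := by
  rcases IsSimpleRing.eq_zero_or_one_of_isIdempotentElem (isIdempotentElem_subgroupAverage.map f)
    (f.map_mem_center_of_surjective hf (subgroupAverage_mem_center (N := N))) with h0 | h1
  · right
    rw [← map_sum, ← natCast_card_mul_subgroupAverage, map_mul, h0, mul_zero]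
  · left
    intro n hn
    rw [MonoidHom.mem_ker, ← Units.val_eq_one, coe_unitsHom_apply, ← mul_one (f _), ← h1,
      ← map_mul, of_mul_subgroupAverage hn, h1]

theorem geom_sum_eq_zero_of_pow_eq_one {a : G} (ha : IsOfFinOrder a) [(zpowers a).Normal]
    (hne : f (of k G a) ≠ 1) {n : ℕ} (hn : f (of k G a) ^ n = 1) :
    ∑ j ∈ range n, f (of k G a) ^ j = 0 := by
  set d := f (of k G a)
  let := Fintype.ofEquiv _ (finEquivZPowers ha)
  have hsum : ∑ j ∈ range (orderOf a), d ^ j = 0 := by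
    rcases le_ker_unitsHom_or_sum_eq_zero hf (zpowers a) with hle | h0
    · exact absurd (Units.ext_iff.1 (hle (mem_zpowers a))) hne
    · rw [← h0, ← Fin.sum_univ_eq_sum_range]
      exact Fintype.sum_equiv (finEquivZPowers ha) _ _ fun j ↦ by
        simp [finEquivZPowers_apply, d, ← map_pow]
  have hd : d ^ orderOf d = 1 := pow_orderOf_eq_one d
  -- `hsum` is `orderOf a / orderOf d` copies of the geometric sum of length `orderOf d`
  have hsum' : ∑ j ∈ range (orderOf d), d ^ j = 0 := by
    obtain ⟨m, hm⟩ := orderOf_dvd_of_pow_eq_one (x := d) (n := orderOf a) (by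
      rw [← map_pow, of_apply, single_pow, pow_orderOf_eq_one, one_pow, ← one_def, map_one])
    rw [hm, geom_sum_mul_eq_nsmul_of_pow_eq_one hd, nsmul_eq_mul] at hsum
    have hm0 : m ≠ 0 := by rintro rfl; simp [ha.orderOf_pos.ne'] at hm
    exact ((f.comp (algebraMap k k[G])).isUnit_natCast hm0).mul_right_eq_zero.1 hsum
  obtain ⟨m, rfl⟩ := orderOf_dvd_of_pow_eq_one hn
  rw [geom_sum_mul_eq_nsmul_of_pow_eq_one hd, hsum', smul_zero]

open scoped IsMulCommutative in
theorem isCyclic_map_unitsHom {A : Subgroup G} [IsMulCommutative A] [Finite A]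
    (hA : ∀ a ∈ A, (zpowers a).Normal) : IsCyclic (A.map (unitsHom f)) := by
  set D := A.map (unitsHom f)
  have : Finite D := .of_surjective _ ((unitsHom f).subgroupMap_surjective A)
  have hgeom : ∀ {p : ℕ} (u : D), u ^ p = 1 → u ≠ 1 →
      ∑ j ∈ range p, ((u : Bˣ) : B) ^ j = 0 := by
    rintro p ⟨_, a, ha, rfl⟩ hu hne
    have := hA a ha
    exact geom_sum_eq_zero_of_pow_eq_one hf (orderOf_pos_iff.1 (orderOf_mk a ha ▸ orderOf_pos _))
      (fun h ↦ hne (Subtype.ext (Units.ext h)))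
      (by simpa using congrArg (fun u : D ↦ ((u : Bˣ) : B)) hu)
  refine isCyclic_of_pow_prime_eq_one_mem_zpowers (D := D) fun p hp x y hy hx ↦
    by_contra fun hxy ↦ ?_
  have hyp : y ^ p = 1 := hy ▸ pow_orderOf_eq_one y
  have hp0 : (p : B) = 0 := by
    refine natCast_eq_zero_of_geom_sum_eq_zero (x := ((x : Bˣ) : B)) (y := ((y : Bˣ) : B))
      ((Commute.all x y).map D.subtype).units_val (fun i _ ↦ ?_)
      fun j hj0 hjp ↦ ?_
    · have hne : x * y ^ i ≠ 1 := fun h ↦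
        hxy (eq_inv_of_mul_eq_one_left h ▸ inv_mem (pow_mem (mem_zpowers y) i))
      simpa using hgeom (x * y ^ i)
        (by rw [mul_pow, hx, one_mul, ← pow_mul, mul_comm, pow_mul, hyp, one_pow]) hne
    · simpa using hgeom (y ^ j) (by rw [← pow_mul, mul_comm, pow_mul, hyp, one_pow])
        (pow_ne_one_of_lt_orderOf hj0.ne' (hy ▸ hjp))
  exact ((f.comp (algebraMap k k[G])).isUnit_natCast hp.ne_zero).ne_zero hp0

end SimpleQuotient

end MonoidAlgebra

theorem exists_mul_zpow_inv_mem_inf_ker {G M : Type*} [Group G] [Group M] (φ : G →* M)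
    (A : Subgroup G) [IsCyclic (A.map φ)] :
    ∃ g ∈ A, ∀ a ∈ A, ∃ k : ℤ, a * (g ^ k)⁻¹ ∈ A ⊓ φ.ker := by
  obtain ⟨⟨_, g, hg, rfl⟩, hgen⟩ := IsCyclic.exists_generator (α := A.map φ)
  refine ⟨g, hg, fun a ha ↦ ?_⟩
  obtain ⟨k, hk⟩ := Subgroup.mem_zpowers_iff.1 (hgen ⟨φ a, a, ha, rfl⟩)
  refine ⟨k, mem_inf.2 ⟨mul_mem ha (inv_mem (zpow_mem hg k)), ?_⟩⟩
  have : φ g ^ k = φ a := congrArg Subtype.val hk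
  simp [this]

/-- Let `G` be a finite group and `A` an abelian subgroup such
that every subgroup of `A` is normal in `G`. Let `ℋ` be the family of subgroups
`H ≤ A` with `A/H` cyclic (i.e. some `g ∈ A` generates `A` modulo `H`) and with
the commutator subgroup of `G` not contained in `H`. Then for every
noncommutative simple ring `B`: `B` is a quotient of `ℚG` iff `B` is a quotient
of `ℚ[G/H]` for some `H ∈ ℋ`. -/
theorem simple_quotients_via_cyclic_quotients_of_normal_abelian
    (G : Type) [Group G] [Finite G] (A : Subgroup G)
    (hab : ∀ x y : A, x * y = y * x)
    (hnormal : ∀ H : Subgroup G, H ≤ A → H.Normal)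
    (B : Type) [Ring B] (hB : IsSimpleRing B) (hnc : ¬∀ u v : B, u * v = v * u) :
    (∃ f : MonoidAlgebra ℚ G →+* B, Function.Surjective f) ↔
      ∃ H : Subgroup G, H ≤ A ∧
        (∃ g ∈ A, ∀ a ∈ A, ∃ k : ℤ, a * (g ^ k)⁻¹ ∈ H) ∧
        ¬commutator G ≤ H ∧
        ∀ [H.Normal], ∃ f : MonoidAlgebra ℚ (G ⧸ H) →+* B, Function.Surjective f := by
  constructor
  · rintro ⟨f, hf⟩
    have : IsMulCommutative A := ⟨⟨hab⟩⟩
    have := isCyclic_map_unitsHom hf fun a ha ↦ hnormal _ (zpowers_le.2 ha)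
    have := hnormal (A ⊓ (unitsHom f).ker) inf_le_left
    obtain ⟨F, hF⟩ :=
      exists_ringHom_comp_mapDomainRingHom_eq f (A ⊓ (unitsHom f).ker) inf_le_right
    have hFsurj : Function.Surjective F := .of_comp (hF ▸ hf)
    refine ⟨_, inf_le_left, exists_mul_zpow_inv_mem_inf_ker _ A, fun hle ↦ hnc ?_, ⟨F, hFsurj⟩⟩
    have := Subgroup.Normal.quotient_commutative_iff_commutator_le.2 hle
    exact mul_comm_of_surjective F hFsurj
  · rintro ⟨H, hHA, -, -, hquot⟩
    have := hnormal H hHA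
    obtain ⟨F, hF⟩ := hquot
    exact ⟨F.comp (mapDomainRingHom ℚ (QuotientGroup.mk' H)),
      hF.comp (mapDomain_surjective QuotientGroup.mk_surjective)⟩
end
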